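/- For every (n,m) ∈ ℤ², the two-dimensional LGF integral admits the one-dimensional representation B_c(n,m) = (1/(2π)) ∫_{−π}^{π} e^{i n θ} / ( K(θ)^{|m|} · (K(θ) − 1/K(θ)) ) dθ. -/

import Mathlib

open MeasureTheory

/-- The lattice Green's function of the 2D screened Poisson equation. -/
noncomputable def B (α₁ c : ℝ) (n m : ℤ) : ℂ :=
  (1 / (2 * Real.pi) ^ 2 : ℂ) *
    ∫ ξ : ℝ × ℝ in Set.Icc (-Real.pi) Real.pi ×ˢ Set.Icc (-Real.pi) Real.pi,
      Complex.exp (-Complex.I * ((n : ℂ) * (ξ.1 : ℂ) + (m : ℂ) * (ξ.2 : ℂ))) /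
        ((2 * α₁ * (1 - Real.cos ξ.1) + 2 * (1 - Real.cos ξ.2) + c ^ 2 : ℝ) : ℂ)

/-- `K(θ) = (φ(θ) + √(φ(θ)² − 4))/2` with `φ(θ) = λ + c² − 2α₁ cos θ`. -/
noncomputable def Kr (α₁ c θ : ℝ) : ℝ :=
  ((2 + 2 * α₁ + c ^ 2 - 2 * α₁ * Real.cos θ) +
    Real.sqrt ((2 + 2 * α₁ + c ^ 2 - 2 * α₁ * Real.cos θ) ^ 2 - 4)) / 2

/-!
For fixed `ξ₁`, the denominator `σ(ξ) + c²` equals `K + K⁻¹ - 2 cos ξ₂` with `K = K(ξ₁) > 1`,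
and `(K - K⁻¹) / (K + K⁻¹ - 2 cos ξ₂)` is the Poisson kernel `∑ⱼ K^{-|j|} e^{i j ξ₂}`.
Integrating this absolutely convergent series term by term against `e^{-i m ξ₂}` picks out the
single coefficient `K^{-|m|} / (K - K⁻¹)`, which evaluates the inner integral of `B`. The outer
integral becomes the claimed one after the substitution `θ = -ξ₁`, as `K` is even in `θ`.
-/

open Complex
open scoped Real

theorem inv_one_sub_add_inv_one_sub_sub_one {r z : ℂ} (hz : z ≠ 0) (h₁ : 1 - r * z ≠ 0)
    (h₂ : 1 - r * z⁻¹ ≠ 0) :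
    (1 - r * z)⁻¹ + (1 - r * z⁻¹)⁻¹ - 1 = (1 - r ^ 2) / (1 - r * (z + z⁻¹) + r ^ 2) := by
  have hden : 1 - r * (z + z⁻¹) + r ^ 2 = (1 - r * z) * (1 - r * z⁻¹) := by
    linear_combination -r ^ 2 * mul_inv_cancel₀ hz
  rw [hden, eq_div_iff (mul_ne_zero h₁ h₂)]
  linear_combination (1 - r * z⁻¹) * inv_mul_cancel₀ h₁ + (1 - r * z) * inv_mul_cancel₀ h₂
    - r ^ 2 * mul_inv_cancel₀ hz

theorem hasSum_poissonKernel {r : ℝ} (hr : |r| < 1) (θ : ℝ) :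
    HasSum (fun j : ℤ => (r : ℂ) ^ j.natAbs * cexp (I * j * θ))
      (((1 - r ^ 2) / (1 - 2 * r * Real.cos θ + r ^ 2) : ℝ) : ℂ) := by
  set z := cexp (θ * I) with hz_def
  have hz : ‖z‖ = 1 := norm_exp_ofReal_mul_I θ
  have hrz : ‖(r : ℂ) * z‖ < 1 := by rwa [norm_mul, hz, mul_one, norm_real]
  have hrz' : ‖(r : ℂ) * z⁻¹‖ < 1 := by rwa [norm_mul, norm_inv, hz, inv_one, mul_one, norm_real]
  have hterm (j : ℤ) : (r : ℂ) ^ j.natAbs * cexp (I * j * θ) = r ^ j.natAbs * z ^ j := by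
    rw [hz_def, ← exp_int_mul, mul_right_comm, mul_comm I, mul_comm (j : ℂ)]
  have h_nat : HasSum (fun n : ℕ => (r : ℂ) ^ (n : ℤ).natAbs * cexp (I * (n : ℤ) * θ))
      (1 - r * z)⁻¹ := by
    simp_rw [hterm, Int.natAbs_natCast, zpow_natCast, ← mul_pow]
    exact hasSum_geometric_of_norm_lt_one hrz
  have h_neg : HasSum (fun n : ℕ => (r : ℂ) ^ (-(n : ℤ)).natAbs * cexp (I * (-(n : ℤ) : ℤ) * θ))
      (1 - r * z⁻¹)⁻¹ := by
    simp_rw [hterm, Int.natAbs_neg, Int.natAbs_natCast, zpow_neg, zpow_natCast, ← inv_pow,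
      ← mul_pow]
    exact hasSum_geometric_of_norm_lt_one hrz'
  have hsum := HasSum.of_nat_of_neg (f := fun j : ℤ => (r : ℂ) ^ j.natAbs * cexp (I * j * θ))
    h_nat h_neg
  simp only [Int.natAbs_zero, pow_zero, Int.cast_zero, mul_zero, zero_mul, exp_zero,
    mul_one] at hsum
  have hne_one {w : ℂ} (hw : ‖w‖ < 1) : 1 - w ≠ 0 :=
    sub_ne_zero.mpr fun h => by rw [← h, norm_one] at hw; exact lt_irrefl _ hw
  have hcos : 2 * cos θ = z + z⁻¹ := by rw [two_cos, hz_def, ← exp_neg, neg_mul]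
  have hval : (((1 - r ^ 2) / (1 - 2 * r * Real.cos θ + r ^ 2) : ℝ) : ℂ)
      = (1 - r ^ 2) / (1 - r * (z + z⁻¹) + r ^ 2) := by
    rw [← hcos]; push_cast; ring
  rwa [hval, ← inv_one_sub_add_inv_one_sub_sub_one (exp_ne_zero _) (hne_one hrz) (hne_one hrz')]

theorem integral_exp_int_mul_I (k : ℤ) :
    ∫ θ in -π..π, cexp (I * k * θ) = if k = 0 then (2 * π : ℂ) else 0 := by
  split_ifs with hk
  · simp only [hk, Int.cast_zero, mul_zero, zero_mul, exp_zero, intervalIntegral.integral_const,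
      sub_neg_eq_add, real_smul, ofReal_add, mul_one]
    ring
  have hIk : I * k ≠ 0 := mul_ne_zero I_ne_zero (by exact_mod_cast hk)
  have hperiod : cexp (I * k * π) = cexp (I * k * (-π : ℝ)) := by
    rw [show I * k * π = I * k * (-π : ℝ) + k * (2 * π * I) by push_cast; ring, exp_add,
      exp_int_mul_two_pi_mul_I, mul_one]
  rw [integral_exp_mul_complex hIk, hperiod, sub_self, zero_div]

theorem integral_exp_neg_int_mul_of_hasSum {c : ℤ → ℂ} (hc : Summable fun j => ‖c j‖)
    {f : ℝ → ℂ} (hf : ∀ θ : ℝ, HasSum (fun j : ℤ => c j * cexp (I * j * θ)) (f θ)) (m : ℤ) :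
    ∫ θ in -π..π, cexp (-I * m * θ) * f θ = 2 * π * c m := by
  have hsum := intervalIntegral.hasSum_integral_of_dominated_convergence
    (a := -π) (b := π) (μ := volume)
    (F := fun j (θ : ℝ) => cexp (-I * m * θ) * (c j * cexp (I * j * θ)))
    (fun j _ => ‖c j‖) (fun j => (by fun_prop : Continuous _).aestronglyMeasurable)
    (fun j => ae_of_all _ fun θ _ => by simp [norm_exp])
    (ae_of_all _ fun _ _ => hc) intervalIntegrable_const
    (ae_of_all _ fun θ _ => (hf θ).mul_left _)
  have hcoeff (j : ℤ) : ∫ θ in -π..π, cexp (-I * m * θ) * (c j * cexp (I * j * θ))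
      = if j = m then 2 * π * c m else 0 := by
    have hterm (θ : ℝ) : cexp (-I * m * θ) * (c j * cexp (I * j * θ))
        = c j * cexp (I * (j - m : ℤ) * θ) := by
      rw [mul_left_comm, ← exp_add]; push_cast; ring_nf
    simp_rw [hterm, intervalIntegral.integral_const_mul, integral_exp_int_mul_I, sub_eq_zero]
    split_ifs with hjm
    · rw [hjm, mul_comm]
    · exact mul_zero _
  simp only [hcoeff] at hsum
  exact hsum.unique (hasSum_ite_eq m _)

theorem summable_pow_natAbs {r : ℝ} (hr₀ : 0 ≤ r) (hr₁ : r < 1) :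
    Summable fun j : ℤ => r ^ j.natAbs :=
  .of_nat_of_neg (by simpa using summable_geometric_of_lt_one hr₀ hr₁)
    (by simpa using summable_geometric_of_lt_one hr₀ hr₁)

theorem two_lt_add_inv {K : ℝ} (hK : 1 < K) : 2 < K + K⁻¹ := by
  have hK0 : 0 < K := by linarith
  have hsq : 0 < (K - 1) ^ 2 / K := div_pos (pow_pos (sub_pos.mpr hK) 2) hK0
  have : K + K⁻¹ - 2 = (K - 1) ^ 2 / K := by field_simp; ring
  linarith

theorem integral_exp_div_add_inv_sub_two_cos {K : ℝ} (hK : 1 < K) (m : ℤ) :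
    ∫ θ in -π..π, cexp (-I * m * θ) / ((K + K⁻¹ - 2 * Real.cos θ : ℝ) : ℂ)
      = 2 * π / ((K ^ m.natAbs * (K - K⁻¹) : ℝ) : ℂ) := by
  have hK0 : 0 < K := by linarith
  have hr₀ : 0 ≤ K⁻¹ := inv_nonneg.mpr hK0.le
  have hr₁ : K⁻¹ < 1 := inv_lt_one_of_one_lt₀ hK
  have hKK : 0 < K - K⁻¹ := by linarith
  set c : ℤ → ℂ := fun j => (((K - K⁻¹)⁻¹ * K⁻¹ ^ j.natAbs : ℝ) : ℂ) with hc_def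
  have hc : Summable fun j => ‖c j‖ := by
    simp only [hc_def, norm_real, Real.norm_eq_abs, abs_mul, abs_pow, abs_inv, abs_of_pos hKK,
      abs_of_pos hK0]
    exact (summable_pow_natAbs hr₀ hr₁).mul_left _
  have hf (θ : ℝ) : HasSum (fun j : ℤ => c j * cexp (I * j * θ))
      (((K + K⁻¹ - 2 * Real.cos θ)⁻¹ : ℝ) : ℂ) := by
    have hval : (K + K⁻¹ - 2 * Real.cos θ)⁻¹
        = (K - K⁻¹)⁻¹ * ((1 - K⁻¹ ^ 2) / (1 - 2 * K⁻¹ * Real.cos θ + K⁻¹ ^ 2)) := by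
      have hnum : 1 - K⁻¹ ^ 2 = K⁻¹ * (K - K⁻¹) := by field_simp
      have hden : 1 - 2 * K⁻¹ * Real.cos θ + K⁻¹ ^ 2 = K⁻¹ * (K + K⁻¹ - 2 * Real.cos θ) := by
        field_simp; ring
      rw [hnum, hden, mul_div_mul_left _ _ (inv_ne_zero hK0.ne'), ← mul_div_assoc,
        inv_mul_cancel₀ hKK.ne', one_div]
    have hterm : (fun j : ℤ => c j * cexp (I * j * θ))
        = fun j : ℤ => ((K - K⁻¹)⁻¹ : ℝ) * ((K⁻¹ : ℝ) ^ j.natAbs * cexp (I * j * θ)) := by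
      ext j; simp only [hc_def]; push_cast; ring
    rw [hterm, hval, ofReal_mul]
    exact (hasSum_poissonKernel (by rwa [abs_of_nonneg hr₀]) θ).mul_left _
  have key := integral_exp_neg_int_mul_of_hasSum hc hf m
  simp only [ofReal_inv, ← div_eq_mul_inv, hc_def] at key
  rw [key, div_eq_mul_inv, ← ofReal_inv, mul_inv, inv_pow, mul_comm (K - K⁻¹)⁻¹]

theorem one_lt_Kr {α₁ c : ℝ} (hα : 0 ≤ α₁) (hc : c ≠ 0) (θ : ℝ) : 1 < Kr α₁ c θ := by
  have hc2 : 0 < c ^ 2 := by positivity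
  have := mul_nonneg hα (sub_nonneg.mpr (Real.cos_le_one θ))
  have := Real.sqrt_nonneg ((2 + 2 * α₁ + c ^ 2 - 2 * α₁ * Real.cos θ) ^ 2 - 4)
  rw [Kr]
  linarith

theorem Kr_add_inv {α₁ : ℝ} (hα : 0 ≤ α₁) (c θ : ℝ) :
    Kr α₁ c θ + (Kr α₁ c θ)⁻¹ = 2 + 2 * α₁ + c ^ 2 - 2 * α₁ * Real.cos θ := by
  set φ := 2 + 2 * α₁ + c ^ 2 - 2 * α₁ * Real.cos θ
  have hφ : 2 ≤ φ := by nlinarith [Real.cos_le_one θ, sq_nonneg c]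
  have hsqrt := Real.sq_sqrt (show 0 ≤ φ ^ 2 - 4 by nlinarith)
  have hinv : (Kr α₁ c θ)⁻¹ = φ - Kr α₁ c θ := by
    refine inv_eq_of_mul_eq_one_right ?_
    rw [Kr]
    linear_combination (-1 / 4 : ℝ) * hsqrt
  rw [hinv]
  ring

theorem Kr_neg (α₁ c θ : ℝ) : Kr α₁ c (-θ) = Kr α₁ c θ := by
  rw [Kr, Kr, Real.cos_neg]

theorem setIntegral_Icc_prod_Icc {E : Type*} [NormedAddCommGroup E] [NormedSpace ℝ E]
    {f : ℝ × ℝ → E} {a b c d : ℝ} (hab : a ≤ b) (hcd : c ≤ d)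
    (hf : IntegrableOn f (Set.Icc a b ×ˢ Set.Icc c d)) :
    ∫ ξ in Set.Icc a b ×ˢ Set.Icc c d, f ξ = ∫ x in a..b, ∫ y in c..d, f (x, y) := by
  rw [Measure.volume_eq_prod] at hf ⊢
  rw [setIntegral_prod f hf, integral_Icc_eq_integral_Ioc, ← intervalIntegral.integral_of_le hab]
  congr 1 with x
  rw [integral_Icc_eq_integral_Ioc, ← intervalIntegral.integral_of_le hcd]

theorem B_eq_iteratedIntegral {α₁ c : ℝ} (hα : 0 ≤ α₁) (hc : c ≠ 0) (n m : ℤ) :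
    B α₁ c n m = (1 / (2 * π) ^ 2 : ℂ) * ∫ ξ₁ in -π..π, ∫ ξ₂ in -π..π,
      cexp (-I * (n * ξ₁ + m * ξ₂)) /
        ((2 * α₁ * (1 - Real.cos ξ₁) + 2 * (1 - Real.cos ξ₂) + c ^ 2 : ℝ) : ℂ) := by
  have hpos (ξ : ℝ × ℝ) : 0 < 2 * α₁ * (1 - Real.cos ξ.1) + 2 * (1 - Real.cos ξ.2) + c ^ 2 := by
    have hc2 : 0 < c ^ 2 := by positivity
    have := mul_nonneg hα (sub_nonneg.mpr (Real.cos_le_one ξ.1))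
    linarith [Real.cos_le_one ξ.2]
  have hcont : Continuous fun ξ : ℝ × ℝ => cexp (-I * (n * ξ.1 + m * ξ.2)) /
      ((2 * α₁ * (1 - Real.cos ξ.1) + 2 * (1 - Real.cos ξ.2) + c ^ 2 : ℝ) : ℂ) :=
    .div (by fun_prop) (by fun_prop) fun ξ => ofReal_ne_zero.mpr (hpos ξ).ne'
  rw [B, setIntegral_Icc_prod_Icc (by linarith [Real.pi_pos]) (by linarith [Real.pi_pos])
    (hcont.continuousOn.integrableOn_compact (isCompact_Icc.prod isCompact_Icc))]

theorem integral_snd_B_integrand {α₁ c : ℝ} (hα : 0 ≤ α₁) (hc : c ≠ 0) (n m : ℤ) (ξ₁ : ℝ) :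
    ∫ ξ₂ in -π..π, cexp (-I * (n * ξ₁ + m * ξ₂)) /
        ((2 * α₁ * (1 - Real.cos ξ₁) + 2 * (1 - Real.cos ξ₂) + c ^ 2 : ℝ) : ℂ)
      = 2 * π * (cexp (-I * n * ξ₁) /
        ((Kr α₁ c ξ₁ ^ m.natAbs * (Kr α₁ c ξ₁ - (Kr α₁ c ξ₁)⁻¹) : ℝ) : ℂ)) := by
  have hσ (ξ₂ : ℝ) : 2 * α₁ * (1 - Real.cos ξ₁) + 2 * (1 - Real.cos ξ₂) + c ^ 2
      = Kr α₁ c ξ₁ + (Kr α₁ c ξ₁)⁻¹ - 2 * Real.cos ξ₂ := by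
    rw [Kr_add_inv hα]; ring
  have hexp (ξ₂ : ℝ) : -I * (n * ξ₁ + m * ξ₂) = -I * n * ξ₁ + -I * m * ξ₂ := by ring
  simp_rw [hσ, hexp, exp_add, mul_div_assoc]
  rw [intervalIntegral.integral_const_mul,
    integral_exp_div_add_inv_sub_two_cos (one_lt_Kr hα hc ξ₁), mul_div_left_comm]

theorem stmt9_general (α₁ c : ℝ) (hα₀ : 0 < α₁) (hc : 0 < c) (n m : ℤ) :
    B α₁ c n m =
      (1 / (2 * Real.pi) : ℂ) *
        ∫ θ : ℝ in (-Real.pi)..Real.pi,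
          Complex.exp (Complex.I * (n : ℂ) * (θ : ℂ)) /
            ((Kr α₁ c θ ^ m.natAbs * (Kr α₁ c θ - 1 / Kr α₁ c θ) : ℝ) : ℂ) := by
  set D : ℝ → ℂ := fun θ => ((Kr α₁ c θ ^ m.natAbs * (Kr α₁ c θ - (Kr α₁ c θ)⁻¹) : ℝ) : ℂ)
  have hreflect :
      ∫ θ in -π..π, cexp (-I * n * θ) / D θ = ∫ θ in -π..π, cexp (I * n * θ) / D θ := by
    rw [← neg_neg π, ← intervalIntegral.integral_comp_neg, neg_neg]
    simp only [D, Kr_neg, ofReal_neg]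
    ring_nf
  simp only [B_eq_iteratedIntegral hα₀.le hc.ne', integral_snd_B_integrand hα₀.le hc.ne',
    intervalIntegral.integral_const_mul, hreflect, D, one_div]
  field_simp

/-- One-dimensional integral representation of the LGF:
`B_c(n,m) = (1/2π) ∫_{−π}^{π} e^{inθ} / (K^{|m|}(K − 1/K)) dθ`. -/
theorem stmt9 (α₁ c : ℝ) (hα₀ : 0 < α₁) (hα₁ : α₁ ≤ 1) (hc : 0 < c) (n m : ℤ) :
    B α₁ c n m =
      (1 / (2 * Real.pi) : ℂ) *
        ∫ θ : ℝ in (-Real.pi)..Real.pi,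
          Complex.exp (Complex.I * (n : ℂ) * (θ : ℂ)) /
            ((Kr α₁ c θ ^ m.natAbs * (Kr α₁ c θ - 1 / Kr α₁ c θ) : ℝ) : ℂ) :=
  stmt9_general α₁ c hα₀ hc n m
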